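/- arXiv:0708.2271 — 2 statements merged into one kernel-verified Lean document; each statement's English description precedes it below -/
import Mathlib

section
/- Let $p$ be nonvanishing $C^1$, $q$ continuous, and $g_0$ a nonvanishing $C^2$ solution of $(p g_0')' + q g_0 = 0$ on a bounded interval $I$ containing $0$, with $g_0$, $1/g_0$, $p$, $1/p$ bounded. Define $\widetilde{X}^{(0)} \equiv 1$, $\widetilde{X}^{(n)}(x) = n\int_0^x \widetilde{X}^{(n-1)} g_0^2$ for odd $n$, $\widetilde{X}^{(n)}(x) = n\int_0^x \widetilde{X}^{(n-1)} (p g_0^2)^{-1}$ for even $n$. Then $u_1 = g_0 \sum_{\text{even } n \geq 0} \frac{\omega^n}{n!} \widetilde{X}^{(n)}$ solves $(p u_1')' + q u_1 = \omega^2 u_1$ on $I$ for every $\omega \in \mathbb{C}$. -/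
open scoped Nat

/-- The SPPS recursive integrals: `spps wodd weven 0 ≡ 1` and
`spps wodd weven n x = n ∫₀ˣ spps wodd weven (n-1) · w`, where the weight `w`
is `wodd` when `n` is odd and `weven` when `n` is even. -/
noncomputable def spps (wodd weven : ℝ → ℂ) : ℕ → ℝ → ℂ
  | 0 => fun _ => 1
  | n + 1 => fun x => (n + 1 : ℂ) *
      ∫ t in (0:ℝ)..x,
        spps wodd weven n t * (if (n + 1) % 2 = 1 then wodd t else weven t)

/-!
Write `X n` for `spps (g₀²) (1 / (p g₀²)) n`, so that `(X (n + 1))' = (n + 1) X n w_{n+1}` with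
the weight of parity `n + 1`. Splitting `∑ ωⁿ/n! X n` into its even part `S` and odd part `V`,
termwise differentiation gives `S' = ω V / (p g₀²)` and `V' = ω g₀² S`. It is justified by the
bound `‖X n x‖ ≤ (M |x|)ⁿ`, with `M` bounding both weights, which dominates both series by
subseries of the exponential series.
Then `p (g₀ S)' = p g₀' S + ω V / g₀`, and differentiating once more with `(p g₀')' = -q g₀`,
the two terms in `g₀' V` cancel and `(p (g₀ S)')' = -q g₀ S + ω² g₀ S`.
-/

open Set Filter Topology

section Spps

variable {wo we : ℝ → ℂ} {s : Set ℝ} {n : ℕ} {x : ℝ}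

def sppsWeight (wo we : ℝ → ℂ) (n : ℕ) (t : ℝ) : ℂ :=
  if n % 2 = 1 then wo t else we t

theorem spps_succ_apply (wo we : ℝ → ℂ) (n : ℕ) (x : ℝ) :
    spps wo we (n + 1) x =
      (n + 1 : ℂ) * ∫ t in (0 : ℝ)..x, spps wo we n t * sppsWeight wo we (n + 1) t :=
  rfl

theorem sppsWeight_two_mul_add_one (wo we : ℝ → ℂ) (k : ℕ) :
    sppsWeight wo we (2 * k + 1) = wo := by
  funext t
  simp [sppsWeight, Nat.add_mod]

theorem sppsWeight_two_mul_add_two (wo we : ℝ → ℂ) (k : ℕ) :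
    sppsWeight wo we (2 * k + 2) = we := by
  funext t
  simp [sppsWeight]

theorem continuousOn_sppsWeight (hwo : ContinuousOn wo s) (hwe : ContinuousOn we s) (n : ℕ) :
    ContinuousOn (sppsWeight wo we n) s := by
  unfold sppsWeight
  split_ifs
  exacts [hwo, hwe]

theorem norm_sppsWeight_le {M : ℝ} (hwo : ∀ t ∈ s, ‖wo t‖ ≤ M) (hwe : ∀ t ∈ s, ‖we t‖ ≤ M)
    (n : ℕ) : ∀ t ∈ s, ‖sppsWeight wo we n t‖ ≤ M := by
  unfold sppsWeight
  split_ifs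
  exacts [hwo, hwe]

theorem hasDerivAt_spps_succ_of_continuousOn (hs : IsOpen s) [s.OrdConnected] (h0 : 0 ∈ s)
    (hw : ContinuousOn (sppsWeight wo we (n + 1)) s) (hn : ContinuousOn (spps wo we n) s)
    (hx : x ∈ s) :
    HasDerivAt (spps wo we (n + 1))
      ((n + 1) * (spps wo we n x * sppsWeight wo we (n + 1) x)) x := by
  have hf := hn.mul hw
  exact (intervalIntegral.integral_hasDerivAt_right
    ((hf.mono (Set.OrdConnected.uIcc_subset inferInstance h0 hx)).intervalIntegrable)
    (hf.stronglyMeasurableAtFilter hs x hx) (hf.continuousAt (hs.mem_nhds hx))).const_mul _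

theorem continuousOn_spps (hs : IsOpen s) [s.OrdConnected] (h0 : 0 ∈ s)
    (hwo : ContinuousOn wo s) (hwe : ContinuousOn we s) : ∀ n, ContinuousOn (spps wo we n) s
  | 0 => continuousOn_const
  | n + 1 => fun _ hx => (hasDerivAt_spps_succ_of_continuousOn hs h0
      (continuousOn_sppsWeight hwo hwe _) (continuousOn_spps hs h0 hwo hwe n)
      hx).continuousAt.continuousWithinAt

theorem hasDerivAt_spps_succ (hs : IsOpen s) [s.OrdConnected] (h0 : 0 ∈ s)
    (hwo : ContinuousOn wo s) (hwe : ContinuousOn we s) (hx : x ∈ s) :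
    HasDerivAt (spps wo we (n + 1))
      ((n + 1) * (spps wo we n x * sppsWeight wo we (n + 1) x)) x :=
  hasDerivAt_spps_succ_of_continuousOn hs h0 (continuousOn_sppsWeight hwo hwe _)
    (continuousOn_spps hs h0 hwo hwe n) hx

theorem norm_spps_le [s.OrdConnected] (h0 : 0 ∈ s) {M : ℝ}
    (hw : ∀ n, ∀ t ∈ s, ‖sppsWeight wo we n t‖ ≤ M) (n : ℕ) :
    ∀ x ∈ s, ‖spps wo we n x‖ ≤ (M * |x|) ^ n := by
  have hM : 0 ≤ M := (norm_nonneg _).trans (hw 0 0 h0)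
  induction n with
  | zero => simp [spps]
  | succ n ih =>
    intro x hx
    have hint : ‖∫ t in (0 : ℝ)..x, spps wo we n t * sppsWeight wo we (n + 1) t‖ ≤
        M ^ (n + 1) * (|x| ^ (n + 1) / (n + 1)) := by
      calc _ ≤ |∫ t in (0 : ℝ)..x, M ^ (n + 1) * |t| ^ n| := by
            refine intervalIntegral.norm_integral_le_abs_of_norm_le
              (MeasureTheory.ae_restrict_of_forall_mem measurableSet_uIoc fun t ht => ?_)
              (Continuous.intervalIntegrable (by fun_prop) _ _)
            have hts : t ∈ s :=
              Set.OrdConnected.uIcc_subset inferInstance h0 hx (uIoc_subset_uIcc ht)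
            calc ‖spps wo we n t * sppsWeight wo we (n + 1) t‖ ≤ (M * |t|) ^ n * M := by
                  rw [norm_mul]; gcongr; exacts [ih t hts, hw _ t hts]
              _ = M ^ (n + 1) * |t| ^ n := by ring
        _ = M ^ (n + 1) * (|x| ^ (n + 1) / (n + 1)) := by
            rw [intervalIntegral.abs_integral_eq_abs_integral_uIoc,
              MeasureTheory.integral_const_mul]
            have h := integral_pow_abs_sub_uIoc (a := 0) (b := x) (n := n)
            simp only [sub_zero] at h
            rw [h, abs_mul, abs_of_nonneg (by positivity), abs_of_nonneg (by positivity)]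
    have hn : ‖(n + 1 : ℂ)‖ = n + 1 := by exact_mod_cast Complex.norm_natCast (n + 1)
    rw [spps_succ_apply, norm_mul, hn]
    calc _ ≤ ((n : ℝ) + 1) * (M ^ (n + 1) * (|x| ^ (n + 1) / (n + 1))) := by gcongr
      _ = (M * |x|) ^ (n + 1) := by field_simp; ring

noncomputable def sppsTerm (wo we : ℝ → ℂ) (ω : ℂ) (n : ℕ) (x : ℝ) : ℂ :=
  ω ^ n / (n ! : ℂ) * spps wo we n x

theorem hasDerivAt_sppsTerm_succ (hs : IsOpen s) [s.OrdConnected] (h0 : 0 ∈ s)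
    (hwo : ContinuousOn wo s) (hwe : ContinuousOn we s) (ω : ℂ) (hx : x ∈ s) :
    HasDerivAt (sppsTerm wo we ω (n + 1))
      (ω * sppsTerm wo we ω n x * sppsWeight wo we (n + 1) x) x := by
  refine ((hasDerivAt_spps_succ hs h0 hwo hwe hx).const_mul _).congr_deriv ?_
  rw [sppsTerm, Nat.factorial_succ]
  push_cast
  field_simp
  ring

theorem norm_sppsTerm_le {C : ℝ} (hC : ‖spps wo we n x‖ ≤ C ^ n) (ω : ℂ) :
    ‖sppsTerm wo we ω n x‖ ≤ (‖ω‖ * C) ^ n / n ! := by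
  rw [sppsTerm, norm_mul, norm_div, norm_pow, Complex.norm_natCast, mul_pow, mul_div_right_comm]
  gcongr

theorem summable_sppsTerm_comp {C : ℝ} (hC : ∀ n, ‖spps wo we n x‖ ≤ C ^ n) {m : ℕ → ℕ}
    (hm : m.Injective) (ω : ℂ) : Summable fun k => sppsTerm wo we ω (m k) x :=
  .of_norm_bounded ((Real.summable_pow_div_factorial _).comp_injective hm)
    fun k => norm_sppsTerm_le (hC (m k)) ω

theorem hasDerivAt_tsum_sppsTerm_comp_succ (hs : IsOpen s) [s.OrdConnected] (h0 : 0 ∈ s)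
    (hwo : ContinuousOn wo s) (hwe : ContinuousOn we s) {M C : ℝ}
    (hw : ∀ n, ∀ y ∈ s, ‖sppsWeight wo we n y‖ ≤ M)
    (hC : ∀ n, ∀ y ∈ s, ‖spps wo we n y‖ ≤ C ^ n) {m : ℕ → ℕ} (hm : m.Injective)
    {w : ℝ → ℂ} (hmw : ∀ k, sppsWeight wo we (m k + 1) = w) (ω : ℂ) (hx : x ∈ s) :
    HasDerivAt (fun y => ∑' k, sppsTerm wo we ω (m k + 1) y)
      (ω * (∑' k, sppsTerm wo we ω (m k) x) * w x) x := by
  have hC0 : 0 ≤ C := by simpa using (norm_nonneg _).trans (hC 1 0 h0)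
  have hu : Summable fun k => ‖ω‖ * ((‖ω‖ * C) ^ m k / (m k)!) * M :=
    (((Real.summable_pow_div_factorial _).comp_injective hm).mul_left _).mul_right _
  have hbound : ∀ k, ∀ y ∈ s, ‖ω * sppsTerm wo we ω (m k) y * sppsWeight wo we (m k + 1) y‖ ≤
      ‖ω‖ * ((‖ω‖ * C) ^ m k / (m k)!) * M := fun k y hy => by
    rw [norm_mul, norm_mul]
    gcongr
    exacts [norm_sppsTerm_le (hC _ y hy) ω, hw _ y hy]
  have h := hasDerivAt_tsum_of_isPreconnected hu hs (Set.OrdConnected.isPreconnected inferInstance)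
    (fun k y hy => hasDerivAt_sppsTerm_succ hs h0 hwo hwe ω hy) hbound h0
    (summable_sppsTerm_comp (fun n => hC n 0 h0) (add_left_injective 1 |>.comp hm) ω) hx
  simp only [hmw] at h
  rwa [tsum_mul_right, tsum_mul_left] at h

noncomputable def sppsEven (wo we : ℝ → ℂ) (ω : ℂ) (x : ℝ) : ℂ :=
  ∑' k, sppsTerm wo we ω (2 * k) x

noncomputable def sppsOdd (wo we : ℝ → ℂ) (ω : ℂ) (x : ℝ) : ℂ :=
  ∑' k, sppsTerm wo we ω (2 * k + 1) x

theorem hasDerivAt_sppsOdd (hs : IsOpen s) [s.OrdConnected] (h0 : 0 ∈ s)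
    (hwo : ContinuousOn wo s) (hwe : ContinuousOn we s) {M C : ℝ}
    (hw : ∀ n, ∀ y ∈ s, ‖sppsWeight wo we n y‖ ≤ M)
    (hC : ∀ n, ∀ y ∈ s, ‖spps wo we n y‖ ≤ C ^ n) (ω : ℂ) (hx : x ∈ s) :
    HasDerivAt (sppsOdd wo we ω) (ω * sppsEven wo we ω x * wo x) x :=
  hasDerivAt_tsum_sppsTerm_comp_succ hs h0 hwo hwe hw hC (m := fun k => 2 * k)
    (fun _ _ h => by simpa using h) (sppsWeight_two_mul_add_one wo we) ω hx

theorem hasDerivAt_sppsEven (hs : IsOpen s) [s.OrdConnected] (h0 : 0 ∈ s)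
    (hwo : ContinuousOn wo s) (hwe : ContinuousOn we s) {M C : ℝ}
    (hw : ∀ n, ∀ y ∈ s, ‖sppsWeight wo we n y‖ ≤ M)
    (hC : ∀ n, ∀ y ∈ s, ‖spps wo we n y‖ ≤ C ^ n) (ω : ℂ) (hx : x ∈ s) :
    HasDerivAt (sppsEven wo we ω) (ω * sppsOdd wo we ω x * we x) x := by
  have hsplit : ∀ y ∈ s, sppsEven wo we ω y = 1 + ∑' k, sppsTerm wo we ω (2 * k + 1 + 1) y :=
    fun y hy => by
      rw [sppsEven, (summable_sppsTerm_comp (fun n => hC n y hy) (m := fun k => 2 * k)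
        (fun _ _ h => by simpa using h) ω).tsum_eq_zero_add]
      simp [sppsTerm, spps, mul_add]
  exact ((hasDerivAt_tsum_sppsTerm_comp_succ hs h0 hwo hwe hw hC (m := fun k => 2 * k + 1)
    (fun _ _ h => by simpa using h) (sppsWeight_two_mul_add_two wo we) ω hx).const_add 1)
    |>.congr_of_eventuallyEq (eventually_of_mem (hs.mem_nhds hx) hsplit)

end Spps

theorem sturmLiouville_mul_eq_of_hasDerivAt {p q g S V : ℝ → ℂ} {s : Set ℝ} {ω : ℂ} {x : ℝ}
    (hs : IsOpen s) (hx : x ∈ s) (hp : ∀ y ∈ s, p y ≠ 0) (hg : ∀ y ∈ s, g y ≠ 0)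
    (hgd : ∀ y ∈ s, DifferentiableAt ℝ g y)
    (hpg : HasDerivAt (fun y => p y * deriv g y) (-(q x * g x)) x)
    (hS : ∀ y ∈ s, HasDerivAt S (ω * V y * (p y * g y ^ 2)⁻¹) y)
    (hV : HasDerivAt V (ω * S x * g x ^ 2) x) :
    deriv (fun y => p y * deriv (fun z => g z * S z) y) x + q x * (g x * S x) =
      ω ^ 2 * (g x * S x) := by
  have hflux : (fun y => p y * deriv (fun z => g z * S z) y) =ᶠ[𝓝 x]
      fun y => p y * deriv g y * S y + ω * (g y)⁻¹ * V y :=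
    eventually_of_mem (hs.mem_nhds hx) fun y hy => by
      dsimp only
      rw [((hgd y hy).hasDerivAt.fun_mul (hS y hy)).deriv]
      field_simp [hp y hy, hg y hy]
  rw [hflux.deriv_eq, ((hpg.fun_mul (hS x hx)).fun_add
    ((((hgd x hx).hasDerivAt.fun_inv (hg x hx)).const_mul ω).fun_mul hV)).deriv]
  field_simp [hp x hx, hg x hx]
  ring

theorem spps_u1_sturm_liouville_general (a b : ℝ) (ha : a < 0) (hb : 0 < b) (ω : ℂ)
    (p q g0 : ℝ → ℂ)
    (hp : ContDiffOn ℝ 1 p (Set.Ioo a b))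
    (hp0 : ∀ x ∈ Set.Ioo a b, p x ≠ 0)
    (hg : ContDiffOn ℝ 2 g0 (Set.Ioo a b))
    (hg0 : ∀ x ∈ Set.Ioo a b, g0 x ≠ 0)
    (heq : ∀ x ∈ Set.Ioo a b,
      deriv (fun y => p y * deriv g0 y) x + q x * g0 x = 0)
    (hbd : ∃ M : ℝ, ∀ x ∈ Set.Ioo a b,
      ‖g0 x‖ ≤ M ∧ ‖(g0 x)⁻¹‖ ≤ M ∧ ‖p x‖ ≤ M ∧ ‖(p x)⁻¹‖ ≤ M) :
    ∀ x ∈ Set.Ioo a b,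
      deriv (fun y => p y * deriv (fun s => g0 s * ∑' k : ℕ,
          ω ^ (2 * k) / ((2 * k)! : ℂ) *
            spps (fun t => g0 t ^ 2) (fun t => (p t * g0 t ^ 2)⁻¹) (2 * k) s) y) x +
        q x * (g0 x * ∑' k : ℕ,
          ω ^ (2 * k) / ((2 * k)! : ℂ) *
            spps (fun t => g0 t ^ 2) (fun t => (p t * g0 t ^ 2)⁻¹) (2 * k) x) =
      ω ^ 2 * (g0 x * ∑' k : ℕ,
          ω ^ (2 * k) / ((2 * k)! : ℂ) *
            spps (fun t => g0 t ^ 2) (fun t => (p t * g0 t ^ 2)⁻¹) (2 * k) x) := by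
  intro x hx
  obtain ⟨M, hM⟩ := hbd
  have h0 : (0 : ℝ) ∈ Ioo a b := ⟨ha, hb⟩
  have hM0 : 0 ≤ M := (norm_nonneg _).trans (hM 0 h0).1
  set wo : ℝ → ℂ := fun t => g0 t ^ 2
  set we : ℝ → ℂ := fun t => (p t * g0 t ^ 2)⁻¹
  have hwo : ContinuousOn wo (Ioo a b) := hg.continuousOn.pow 2
  have hwe : ContinuousOn we (Ioo a b) := (hp.continuousOn.mul (hg.continuousOn.pow 2)).inv₀
    fun t ht => mul_ne_zero (hp0 t ht) (pow_ne_zero 2 (hg0 t ht))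
  have hw : ∀ n, ∀ t ∈ Ioo a b, ‖sppsWeight wo we n t‖ ≤ M ^ 2 + M ^ 3 := by
    refine norm_sppsWeight_le (fun t ht => ?_) (fun t ht => ?_)
    · obtain ⟨hgM, -, -, -⟩ := hM t ht
      simp only [wo, norm_pow]
      nlinarith [pow_le_pow_left₀ (norm_nonneg _) hgM 2, pow_nonneg hM0 3]
    · obtain ⟨-, hginvM, -, hpinvM⟩ := hM t ht
      simp only [we, mul_inv, ← inv_pow, norm_mul, norm_pow]
      nlinarith [mul_le_mul hpinvM (pow_le_pow_left₀ (norm_nonneg _) hginvM 2) (by positivity) hM0]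
  have hC : ∀ n, ∀ y ∈ Ioo a b, ‖spps wo we n y‖ ≤ ((M ^ 2 + M ^ 3) * max |a| |b|) ^ n :=
    fun n y hy => (norm_spps_le h0 hw n y hy).trans <| by
      gcongr
      exact abs_le_max_abs_abs hy.1.le hy.2.le
  have hgd : ∀ y ∈ Ioo a b, DifferentiableAt ℝ g0 y := fun y hy =>
    (hg.differentiableOn two_ne_zero).differentiableAt (isOpen_Ioo.mem_nhds hy)
  have hpg : HasDerivAt (fun y => p y * deriv g0 y) (-(q x * g0 x)) x := by
    have hpd := (hp.differentiableOn one_ne_zero).differentiableAt (isOpen_Ioo.mem_nhds hx)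
    have hg'd := ((hg.deriv_of_isOpen isOpen_Ioo (m := 1) (by norm_num)).differentiableOn
      one_ne_zero).differentiableAt (isOpen_Ioo.mem_nhds hx)
    rw [← eq_neg_of_add_eq_zero_left (heq x hx)]
    exact (hpd.mul hg'd).hasDerivAt
  exact sturmLiouville_mul_eq_of_hasDerivAt isOpen_Ioo hx hp0 hg0 hgd hpg
    (fun y hy => hasDerivAt_sppsEven isOpen_Ioo h0 hwo hwe hw hC ω hy)
    (hasDerivAt_sppsOdd isOpen_Ioo h0 hwo hwe hw hC ω hx)

/-- `u₁ = g₀ ∑_{even n} ωⁿ/n! X̃⁽ⁿ⁾` solves `(p u₁')' + q u₁ = ω² u₁`, where `X̃⁽ⁿ⁾`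
has weight `g₀²` for odd `n` and `(p g₀²)⁻¹` for even `n`. -/
theorem spps_u1_sturm_liouville (a b : ℝ) (ha : a < 0) (hb : 0 < b) (ω : ℂ)
    (p q g0 : ℝ → ℂ)
    (hp : ContDiffOn ℝ 1 p (Set.Ioo a b))
    (hp0 : ∀ x ∈ Set.Ioo a b, p x ≠ 0)
    (hq : ContinuousOn q (Set.Ioo a b))
    (hg : ContDiffOn ℝ 2 g0 (Set.Ioo a b))
    (hg0 : ∀ x ∈ Set.Ioo a b, g0 x ≠ 0)
    (heq : ∀ x ∈ Set.Ioo a b,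
      deriv (fun y => p y * deriv g0 y) x + q x * g0 x = 0)
    (hbd : ∃ M : ℝ, ∀ x ∈ Set.Ioo a b,
      ‖g0 x‖ ≤ M ∧ ‖(g0 x)⁻¹‖ ≤ M ∧ ‖p x‖ ≤ M ∧ ‖(p x)⁻¹‖ ≤ M) :
    ∀ x ∈ Set.Ioo a b,
      deriv (fun y => p y * deriv (fun s => g0 s * ∑' k : ℕ,
          ω ^ (2 * k) / ((2 * k)! : ℂ) *
            spps (fun t => g0 t ^ 2) (fun t => (p t * g0 t ^ 2)⁻¹) (2 * k) s) y) x +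
        q x * (g0 x * ∑' k : ℕ,
          ω ^ (2 * k) / ((2 * k)! : ℂ) *
            spps (fun t => g0 t ^ 2) (fun t => (p t * g0 t ^ 2)⁻¹) (2 * k) x) =
      ω ^ 2 * (g0 x * ∑' k : ℕ,
          ω ^ (2 * k) / ((2 * k)! : ℂ) *
            spps (fun t => g0 t ^ 2) (fun t => (p t * g0 t ^ 2)⁻¹) (2 * k) x) :=
  spps_u1_sturm_liouville_general a b ha hb ω p q g0 hp hp0 hg hg0 heq hbd
end

section
/- Let $u_1 = g_0 \sum_{\text{even } n} \frac{\omega^n}{n!} \widetilde{X}^{(n)}$ and $u_2 = g_0 \sum_{\text{odd } n} \frac{\omega^{n-1}}{n!} X^{(n)}$ be the SPPS solutions of $(p u')' + q u = \omega^2 u$. Then the initial values satisfy $u_1(0) = g_0(0)$, $u_1'(0) = g_0'(0)$, $u_2(0) = 0$, and $u_2'(0) = \frac{1}{g_0(0) p(0)}$. In particular $u_1$ and $u_2$ are linearly independent, so $c_1 u_1 + c_2 u_2$ is the general solution. -/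
/-!
Only the behaviour near `0` matters. If `B` bounds both weights near `0`, then inductively
`‖X⁽ⁿ⁾(x)‖ ≤ (B|x|)ⁿ`: the factor `n` in the recursion cancels the `1/n` from integrating `|t|ⁿ⁻¹`.
So in both SPPS series every term after the first is `O(x²)`, with coefficients dominated by the
series of `cosh (‖ω‖ B)`, and each series has the value and derivative at `0` of its first term:
`1` for the even series, `∫₀ˣ (p g₀²)⁻¹` for the odd one. The product rule with `g₀` gives the
initial values, and `u₁(0) ≠ 0 = u₂(0)`, `u₂'(0) ≠ 0` force linear independence.
-/

open scoped Nat

open Filter Topology Asymptotics Set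

lemma abs_integral_abs_pow (n : ℕ) (x : ℝ) :
    |∫ t in (0:ℝ)..x, |t| ^ n| = |x| ^ (n + 1) / (n + 1) := by
  have hnonneg : ∀ y : ℝ, 0 ≤ y → ∫ t in (0:ℝ)..y, |t| ^ n = y ^ (n + 1) / (n + 1) := by
    intro y hy
    have hpow := integral_pow (a := 0) (b := y) n
    rw [zero_pow n.succ_ne_zero, sub_zero] at hpow
    rw [← hpow]
    refine intervalIntegral.integral_congr fun t ht => ?_
    rw [uIcc_of_le hy] at ht
    simp only [abs_of_nonneg ht.1]
  rcases le_total 0 x with hx | hx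
  · rw [hnonneg x hx, abs_of_nonneg hx, abs_of_nonneg (by positivity)]
  · have hneg : ∫ t in (0:ℝ)..x, |t| ^ n = -∫ t in (0:ℝ)..-x, |t| ^ n := by
      simpa [abs_neg, intervalIntegral.integral_symm (-x) 0] using
        intervalIntegral.integral_comp_neg (a := 0) (b := x) fun t => |t| ^ n
    have hx' : 0 ≤ -x := neg_nonneg.mpr hx
    rw [hneg, hnonneg (-x) hx', abs_neg, abs_of_nonneg (by positivity), abs_of_nonpos hx]

section

variable {wodd weven : ℝ → ℂ}

@[simp]
lemma spps_succ_apply_zero (n : ℕ) : spps wodd weven (n + 1) 0 = 0 := by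
  simp [spps]

lemma spps_one : spps wodd weven 1 = fun x => ∫ t in (0:ℝ)..x, wodd t := by
  funext x
  simp [spps]

lemma norm_spps_le_s8 {s : Set ℝ} {B : ℝ} (hs : s.OrdConnected) (h0 : (0:ℝ) ∈ s)
    (hw : ∀ x ∈ s, ‖wodd x‖ ≤ B ∧ ‖weven x‖ ≤ B) (n : ℕ) {x : ℝ} (hx : x ∈ s) :
    ‖spps wodd weven n x‖ ≤ (B * |x|) ^ n := by
  have hB : 0 ≤ B := (norm_nonneg _).trans (hw 0 h0).1
  induction n generalizing x with
  | zero => simp [spps]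
  | succ m ih =>
    have hint : ‖∫ t in (0:ℝ)..x,
        spps wodd weven m t * (if (m + 1) % 2 = 1 then wodd t else weven t)‖ ≤
        |∫ t in (0:ℝ)..x, B ^ (m + 1) * |t| ^ m| := by
      -- no integrability of `spps` is needed: a non-integrable integrand has integral `0`
      refine intervalIntegral.norm_integral_le_abs_of_norm_le
        (MeasureTheory.ae_restrict_of_forall_mem measurableSet_uIoc fun t ht => ?_)
        ((by fun_prop : Continuous fun t : ℝ => B ^ (m + 1) * |t| ^ m).intervalIntegrable _ _)
      have hts : t ∈ s := hs.uIcc_subset h0 hx (uIoc_subset_uIcc ht)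
      have hweight : ‖if (m + 1) % 2 = 1 then wodd t else weven t‖ ≤ B := by
        split_ifs
        exacts [(hw t hts).1, (hw t hts).2]
      calc _ = ‖spps wodd weven m t‖ * ‖if (m + 1) % 2 = 1 then wodd t else weven t‖ :=
            norm_mul _ _
        _ ≤ (B * |t|) ^ m * B := mul_le_mul (ih hts) hweight (norm_nonneg _) (by positivity)
        _ = B ^ (m + 1) * |t| ^ m := by ring
    rw [intervalIntegral.integral_const_mul, abs_mul, abs_integral_abs_pow,
      abs_of_nonneg (by positivity)] at hint
    calc ‖spps wodd weven (m + 1) x‖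
        = (m + 1) * ‖∫ t in (0:ℝ)..x,
            spps wodd weven m t * (if (m + 1) % 2 = 1 then wodd t else weven t)‖ := by
          rw [spps, norm_mul, ← Nat.cast_succ, Complex.norm_natCast, Nat.cast_succ]
      _ ≤ (m + 1) * (B ^ (m + 1) * (|x| ^ (m + 1) / (m + 1))) := by gcongr
      _ = (B * |x|) ^ (m + 1) := by field_simp; ring

lemma exists_eventually_norm_spps_le_sq
    (hwodd : IsBoundedUnder (· ≤ ·) (𝓝 0) fun x => ‖wodd x‖)
    (hweven : IsBoundedUnder (· ≤ ·) (𝓝 0) fun x => ‖weven x‖) :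
    ∃ B, 0 ≤ B ∧ ∀ᶠ x in 𝓝 0, ∀ n, 2 ≤ n → ‖spps wodd weven n x‖ ≤ B ^ n * x ^ 2 := by
  obtain ⟨B, hB⟩ := hwodd.sup hweven
  obtain ⟨ε, hε, hball⟩ := Metric.eventually_nhds_iff_ball.mp (eventually_map.mp hB)
  have hw : ∀ x ∈ Metric.ball 0 ε, ‖wodd x‖ ≤ B ∧ ‖weven x‖ ≤ B := fun x hx =>
    sup_le_iff.mp (hball x hx)
  have h0 : (0:ℝ) ∈ Metric.ball 0 ε := Metric.mem_ball_self hε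
  refine ⟨B, (norm_nonneg _).trans (hw 0 h0).1, ?_⟩
  filter_upwards [Metric.ball_mem_nhds 0 hε, Icc_mem_nhds (neg_lt_zero.mpr one_pos) one_pos]
    with x hx hx1 n hn
  have hord : (Metric.ball (0:ℝ) ε).OrdConnected := by
    rw [Real.ball_eq_Ioo]
    exact ordConnected_Ioo
  calc ‖spps wodd weven n x‖ ≤ (B * |x|) ^ n := norm_spps_le_s8 hord h0 hw n hx
    _ = B ^ n * |x| ^ n := mul_pow _ _ _
    _ ≤ B ^ n * |x| ^ 2 :=
        mul_le_mul_of_nonneg_left (pow_le_pow_of_le_one (abs_nonneg x) (abs_le.mpr hx1) hn)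
          (pow_nonneg ((norm_nonneg _).trans (hw 0 h0).1) n)
    _ = B ^ n * x ^ 2 := by rw [sq_abs]

end

lemma hasDerivAt_tsum_of_norm_tail_le_sq {E : Type*} [NormedAddCommGroup E] [NormedSpace ℝ E]
    [CompleteSpace E] {F : ℕ → ℝ → E} {b : ℕ → ℝ} {c : E} (hb : Summable b)
    (hF : ∀ᶠ x in 𝓝 0, ∀ k, ‖F (k + 1) x‖ ≤ b k * x ^ 2) (h0 : HasDerivAt (F 0) c 0) :
    HasDerivAt (fun x => ∑' k, F k x) c 0 := by
  have htail : HasDerivAt (fun x => ∑' k, F (k + 1) x) 0 0 := by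
    have hO : (fun x => ∑' k, F (k + 1) x) =O[𝓝 0] fun x => ‖x - 0‖ ^ 2 := by
      refine IsBigO.of_bound (∑' k, b k) (hF.mono fun x hx => ?_)
      simpa [tsum_mul_right] using tsum_of_norm_bounded (hb.hasSum.mul_right (x ^ 2)) hx
    simpa using (hO.hasFDerivAt (𝕜 := ℝ) one_lt_two).hasDerivAt
  refine ((h0.add htail).congr_of_eventuallyEq ?_).congr_deriv (add_zero c)
  filter_upwards [hF] with x hx
  exact tsum_eq_zero_add' ((hb.mul_right (x ^ 2)).of_norm_bounded hx)

noncomputable def sppsEvenSeries (wodd weven : ℝ → ℂ) (ω : ℂ) (x : ℝ) : ℂ :=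
  ∑' k : ℕ, ω ^ (2 * k) / ((2 * k)! : ℂ) * spps wodd weven (2 * k) x

noncomputable def sppsOddSeries (wodd weven : ℝ → ℂ) (ω : ℂ) (x : ℝ) : ℂ :=
  ∑' k : ℕ, ω ^ (2 * k) / ((2 * k + 1)! : ℂ) * spps wodd weven (2 * k + 1) x

section

variable {wodd weven : ℝ → ℂ} (ω : ℂ)

lemma sppsEvenSeries_apply_zero : sppsEvenSeries wodd weven ω 0 = 1 := by
  rw [sppsEvenSeries, tsum_eq_single 0 fun k hk => ?_]
  · simp [spps]
  · obtain ⟨j, rfl⟩ := Nat.exists_eq_succ_of_ne_zero hk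
    simp [Nat.mul_succ]

lemma sppsOddSeries_apply_zero : sppsOddSeries wodd weven ω 0 = 0 := by
  simp [sppsOddSeries]

variable (hwodd : IsBoundedUnder (· ≤ ·) (𝓝 0) fun x => ‖wodd x‖)
  (hweven : IsBoundedUnder (· ≤ ·) (𝓝 0) fun x => ‖weven x‖)
include hwodd hweven

lemma hasDerivAt_sppsEvenSeries : HasDerivAt (sppsEvenSeries wodd weven ω) 0 0 := by
  obtain ⟨B, -, hB⟩ := exists_eventually_norm_spps_le_sq hwodd hweven
  refine hasDerivAt_tsum_of_norm_tail_le_sq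
    (b := fun k => (‖ω‖ * B) ^ (2 * (k + 1)) / (2 * (k + 1))!)
    ((summable_nat_add_iff 1).mpr (Real.hasSum_cosh _).summable) ?_ ?_
  · filter_upwards [hB] with x hx k
    rw [norm_mul, norm_div, norm_pow, Complex.norm_natCast]
    calc _ ≤ ‖ω‖ ^ (2 * (k + 1)) / (2 * (k + 1))! * (B ^ (2 * (k + 1)) * x ^ 2) := by
          gcongr
          exact hx _ (by omega)
      _ = _ := by ring
  · simpa [spps] using hasDerivAt_const (0:ℝ) (1:ℂ)

lemma hasDerivAt_sppsOddSeries (hcont : ContinuousAt wodd 0)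
    (hmeas : StronglyMeasurableAtFilter wodd (𝓝 0)) :
    HasDerivAt (sppsOddSeries wodd weven ω) (wodd 0) 0 := by
  obtain ⟨B, hB0, hB⟩ := exists_eventually_norm_spps_le_sq hwodd hweven
  refine hasDerivAt_tsum_of_norm_tail_le_sq
    (b := fun k => B * ((‖ω‖ * B) ^ (2 * (k + 1)) / (2 * (k + 1))!))
    (((summable_nat_add_iff 1).mpr (Real.hasSum_cosh _).summable).mul_left B) ?_ ?_
  · filter_upwards [hB] with x hx k
    rw [norm_mul, norm_div, norm_pow, Complex.norm_natCast]
    calc _ ≤ ‖ω‖ ^ (2 * (k + 1)) / (2 * (k + 1) + 1)! * (B ^ (2 * (k + 1) + 1) * x ^ 2) := by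
          gcongr
          exact hx _ (by omega)
      _ ≤ ‖ω‖ ^ (2 * (k + 1)) / (2 * (k + 1))! * (B ^ (2 * (k + 1) + 1) * x ^ 2) := by
          gcongr
          exact Nat.le_succ _
      _ = _ := by ring
  · simpa [spps_one] using intervalIntegral.integral_hasDerivAt_right (by simp) hmeas hcont

end

lemma linearIndependent_pair_of_deriv_ne_zero {u₁ u₂ : ℝ → ℂ} {x : ℝ} (h₁ : u₁ x ≠ 0)
    (h₂ : u₂ x = 0) (h₂' : deriv u₂ x ≠ 0) : LinearIndependent ℂ ![u₁, u₂] := by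
  rw [LinearIndependent.pair_iff]
  intro s t hst
  have hs : s = 0 := by simpa [h₁, h₂] using congrFun hst x
  subst hs
  refine ⟨rfl, by_contra fun ht => h₂' ?_⟩
  rw [zero_smul, zero_add, smul_eq_zero] at hst
  simp [hst.resolve_left ht]

theorem spps_initial_values_general (a b : ℝ) (ha : a < 0) (hb : 0 < b) (ω : ℂ)
    (p g0 : ℝ → ℂ)
    (hp : ContDiffOn ℝ 1 p (Set.Ioo a b))
    (hp0 : ∀ x ∈ Set.Ioo a b, p x ≠ 0)
    (hg : ContDiffOn ℝ 2 g0 (Set.Ioo a b))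
    (hg0 : ∀ x ∈ Set.Ioo a b, g0 x ≠ 0)
    (u1 u2 : ℝ → ℂ)
    (hu1 : u1 = fun x => g0 x * ∑' k : ℕ,
      ω ^ (2 * k) / ((2 * k)! : ℂ) *
        spps (fun t => g0 t ^ 2) (fun t => (p t * g0 t ^ 2)⁻¹) (2 * k) x)
    (hu2 : u2 = fun x => g0 x * ∑' k : ℕ,
      ω ^ (2 * k) / ((2 * k + 1)! : ℂ) *
        spps (fun t => (p t * g0 t ^ 2)⁻¹) (fun t => g0 t ^ 2) (2 * k + 1) x) :
    u1 0 = g0 0 ∧ deriv u1 0 = deriv g0 0 ∧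
    u2 0 = 0 ∧ deriv u2 0 = (g0 0 * p 0)⁻¹ ∧
    LinearIndependent ℂ ![u1, u2] := by
  set W₁ : ℝ → ℂ := fun t => g0 t ^ 2
  set W₂ : ℝ → ℂ := fun t => (p t * g0 t ^ 2)⁻¹
  replace hu1 : u1 = g0 * sppsEvenSeries W₁ W₂ ω := hu1
  replace hu2 : u2 = g0 * sppsOddSeries W₂ W₁ ω := hu2
  subst hu1 hu2
  have hnhds : Ioo a b ∈ 𝓝 (0:ℝ) := Ioo_mem_nhds ha hb
  have hg00 : g0 0 ≠ 0 := hg0 0 (mem_of_mem_nhds hnhds)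
  have hp00 : p 0 ≠ 0 := hp0 0 (mem_of_mem_nhds hnhds)
  have hW₁ : ContinuousOn W₁ (Ioo a b) := hg.continuousOn.pow 2
  have hW₂ : ContinuousOn W₂ (Ioo a b) := (hp.continuousOn.mul hW₁).inv₀ fun x hx =>
    mul_ne_zero (hp0 x hx) (pow_ne_zero 2 (hg0 x hx))
  have hW₁b := (hW₁.continuousAt hnhds).norm.isBoundedUnder_le
  have hW₂b := (hW₂.continuousAt hnhds).norm.isBoundedUnder_le
  have hg0' : HasDerivAt g0 (deriv g0 0) 0 :=
    ((hg.contDiffAt hnhds).differentiableAt two_ne_zero).hasDerivAt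
  have hu1' : HasDerivAt (g0 * sppsEvenSeries W₁ W₂ ω) (deriv g0 0) 0 := by
    simpa [sppsEvenSeries_apply_zero] using hg0'.mul (hasDerivAt_sppsEvenSeries ω hW₁b hW₂b)
  have hu2' : HasDerivAt (g0 * sppsOddSeries W₂ W₁ ω) (g0 0 * p 0)⁻¹ 0 := by
    refine (hg0'.mul (hasDerivAt_sppsOddSeries ω hW₂b hW₁b (hW₂.continuousAt hnhds)
      (hW₂.stronglyMeasurableAtFilter isOpen_Ioo 0 (mem_of_mem_nhds hnhds)))).congr_deriv ?_
    simp only [sppsOddSeries_apply_zero, W₂]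
    field_simp
    ring
  have hu10 : (g0 * sppsEvenSeries W₁ W₂ ω) 0 = g0 0 := by simp [sppsEvenSeries_apply_zero]
  have hu20 : (g0 * sppsOddSeries W₂ W₁ ω) 0 = 0 := by simp [sppsOddSeries_apply_zero]
  refine ⟨hu10, hu1'.deriv, hu20, hu2'.deriv, ?_⟩
  exact linearIndependent_pair_of_deriv_ne_zero (hu10 ▸ hg00) hu20
    (hu2'.deriv ▸ inv_ne_zero (mul_ne_zero hg00 hp00))

/-- Initial values of the SPPS solutions: `u₁(0) = g₀(0)`, `u₁'(0) = g₀'(0)`,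
`u₂(0) = 0`, `u₂'(0) = 1/(g₀(0) p(0))`; in particular `u₁, u₂` are linearly
independent. Here `u₂` is normalized with `ω^{n-1}/n!`. -/
theorem spps_initial_values (a b : ℝ) (ha : a < 0) (hb : 0 < b) (ω : ℂ)
    (p q g0 : ℝ → ℂ)
    (hp : ContDiffOn ℝ 1 p (Set.Ioo a b))
    (hp0 : ∀ x ∈ Set.Ioo a b, p x ≠ 0)
    (hq : ContinuousOn q (Set.Ioo a b))
    (hg : ContDiffOn ℝ 2 g0 (Set.Ioo a b))
    (hg0 : ∀ x ∈ Set.Ioo a b, g0 x ≠ 0)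
    (heq : ∀ x ∈ Set.Ioo a b,
      deriv (fun y => p y * deriv g0 y) x + q x * g0 x = 0)
    (hbd : ∃ M : ℝ, ∀ x ∈ Set.Ioo a b,
      ‖g0 x‖ ≤ M ∧ ‖(g0 x)⁻¹‖ ≤ M ∧ ‖p x‖ ≤ M ∧ ‖(p x)⁻¹‖ ≤ M)
    (u1 u2 : ℝ → ℂ)
    (hu1 : u1 = fun x => g0 x * ∑' k : ℕ,
      ω ^ (2 * k) / ((2 * k)! : ℂ) *
        spps (fun t => g0 t ^ 2) (fun t => (p t * g0 t ^ 2)⁻¹) (2 * k) x)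
    (hu2 : u2 = fun x => g0 x * ∑' k : ℕ,
      ω ^ (2 * k) / ((2 * k + 1)! : ℂ) *
        spps (fun t => (p t * g0 t ^ 2)⁻¹) (fun t => g0 t ^ 2) (2 * k + 1) x) :
    u1 0 = g0 0 ∧ deriv u1 0 = deriv g0 0 ∧
    u2 0 = 0 ∧ deriv u2 0 = (g0 0 * p 0)⁻¹ ∧
    LinearIndependent ℂ ![u1, u2] :=
  spps_initial_values_general a b ha hb ω p g0 hp hp0 hg hg0 u1 u2 hu1 hu2
end
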